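/- Let F be a Schwartz function on ℍⁿ × ℝ and L a positive integer. There is a constant C, depending only on L, n and finitely many Schwartz seminorms of F, such that: (a) if |(z',u')| ≤ (1/(2γ))(1+|(z,u)|) then |F((z,u)∘(z',u')⁻¹, w) − F((z,u), w)| ≤ C |(z',u')| (1+|(z,u)|)^{−(L+2n+2)} (1+|w|)^{−(L+2)}; and (b) for all (z',u'), |F((z,u)∘(z',u')⁻¹, w) − F((z,u), w)| ≤ C [(1+|(z,u)∘(z',u')⁻¹|)^{−(L+2n+2)} + (1+|(z,u)|)^{−(L+2n+2)}] (1+|w|)^{−(L+1)}. -/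

import Mathlib

open MeasureTheory Complex SchwartzMap Filter
open scoped BigOperators ComplexConjugate FourierTransform ENNReal

noncomputable section

/-- The underlying space of the Heisenberg group ℍⁿ ≅ ℂⁿ × ℝ. -/
abbrev H (n : ℕ) := (Fin n → ℂ) × ℝ

/-- Heisenberg group multiplication: (z,t)∘(z',t') = (z+z', t+t'+2 Im(z·conj z')). -/
def Hmul {n : ℕ} (x y : H n) : H n :=
  (x.1 + y.1, x.2 + y.2 + 2 * (∑ j, x.1 j * conj (y.1 j)).im)

/-- Heisenberg group inverse: (z,t)⁻¹ = (-z,-t). -/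
def Hinv {n : ℕ} (x : H n) : H n := (-x.1, -x.2)

/-- Homogeneous norm |(z,t)| = (|z|² + |t|)^{1/2}. -/
def Hnorm {n : ℕ} (x : H n) : ℝ := Real.sqrt ((∑ j, Complex.normSq (x.1 j)) + |x.2|)

/-- Convolution on ℍⁿ : (f∗g)(x) = ∫ f(x∘y⁻¹) g(y) dy. -/
def Hconv {n : ℕ} (f g : H n → ℝ) (x : H n) : ℝ := ∫ y, f (Hmul x (Hinv y)) * g y

/-- Partial convolution in the central variable: (f ∗₂ h)(z,u) = ∫ f(z,u−v) h(v) dv. -/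
def conv2 {n : ℕ} (f : H n → ℝ) (h : ℝ → ℝ) (x : H n) : ℝ := ∫ v, f (x.1, x.2 - v) * h v

/-- Ordinary convolution on ℝ. -/
def convR (h k : ℝ → ℝ) (x : ℝ) : ℝ := ∫ v, h (x - v) * k v

/-- Convolution on the direct product group ℍⁿ × ℝ. -/
def PConv {n : ℕ} (F G : H n × ℝ → ℝ) (p : H n × ℝ) : ℝ :=
  ∫ q : H n × ℝ, F (Hmul p.1 (Hinv q.1), p.2 - q.2) * G q

/-- The projection π : (πF)(z,u) = ∫ F((z,u−v),v) dv. -/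
def piProj {n : ℕ} (F : H n × ℝ → ℝ) (x : H n) : ℝ := ∫ v, F ((x.1, x.2 - v), v)

/-- Nonisotropic dilation ψ_s(z,u) = s^{−2n−2} ψ(z/s, u/s²). -/
def dil1 {n : ℕ} (ψ : H n → ℝ) (s : ℝ) (x : H n) : ℝ :=
  (s ^ (2 * n + 2))⁻¹ * ψ ((s : ℂ)⁻¹ • x.1, x.2 / s ^ 2)

/-- Dilation on ℝ: η_t(v) = t⁻¹ η(v/t). -/
def dil2 (η : ℝ → ℝ) (t : ℝ) (v : ℝ) : ℝ := t⁻¹ * η (v / t)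

/-- All moments of a function on ℝ vanish. -/
def momentsVanishR (η : ℝ → ℝ) : Prop := ∀ γ : ℕ, ∫ v : ℝ, v ^ γ * η v = 0

/-- All moments of a function on ℍⁿ vanish. -/
def momentsVanishH {n : ℕ} (ψ : H n → ℝ) : Prop :=
  ∀ (α β : Fin n → ℕ) (γ : ℕ),
    ∫ x : H n, (∏ j, ((x.1 j).re ^ α j * (x.1 j).im ^ β j)) * x.2 ^ γ * ψ x = 0

/-- A function on ℍⁿ is radial in the ℂⁿ-variable. -/
def HRadial {n : ℕ} (ψ : H n → ℝ) : Prop :=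
  ∀ (z z' : Fin n → ℂ) (u : ℝ),
    (∑ j, Complex.normSq (z j)) = (∑ j, Complex.normSq (z' j)) → ψ (z, u) = ψ (z', u)

/-- The product moment conditions defining S_∞(ℍⁿ × ℝ). -/
def SInf {n : ℕ} (F : H n × ℝ → ℝ) : Prop :=
  (∀ (α β : Fin n → ℕ) (γ : ℕ) (v : ℝ),
    ∫ x : H n, (∏ j, ((x.1 j).re ^ α j * (x.1 j).im ^ β j)) * x.2 ^ γ * F (x, v) = 0) ∧
  (∀ (γ : ℕ) (x : H n), ∫ v : ℝ, v ^ γ * F (x, v) = 0)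

/-- The flag component function ψ_{s,t} = ψ^{(1)}_s ∗₂ ψ^{(2)}_t. -/
def psist {n : ℕ} (ψa : H n → ℝ) (ψb : ℝ → ℝ) (s t : ℝ) : H n → ℝ :=
  conv2 (dil1 ψa s) (dil2 ψb t)

/-- The product kernel Ψ_{s,t}((z,u),r) = ψ^{(1)}_s(z,u) ψ^{(2)}_t(r) on ℍⁿ × ℝ. -/
def PsiST {n : ℕ} (ψa : H n → ℝ) (ψb : ℝ → ℝ) (s t : ℝ) : H n × ℝ → ℝ :=
  fun p => dil1 ψa s p.1 * dil2 ψb t p.2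


/-!
For `|(z',u')|` small compared with `1 + |(z,u)|`, the mean value theorem along the straight
segment from `((z,u), w)` to `((z,u)∘(z',u')⁻¹, w)` gives (a): that segment is
`θ ↦ ((z,u)∘(θz',θu')⁻¹, w)`, every point `p` of it satisfies `1 + |(z,u)| ≤ 2γ (1 + |p.1|)` by
the quasi-triangle inequality, and its Euclidean length is at most `3 |(z',u')| (1 + |(z,u)|)`,
so the rapid decay of `DF` in the Euclidean norm gives the bound, since
`1 + |x| ≤ (n + 2) (1 + ‖x‖)`. Part (b) is the triangle inequality together with the rapid
decay of `F` itself.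
-/

section Heisenberg

variable {n : ℕ}

lemma hnorm_nonneg (x : H n) : 0 ≤ Hnorm x := Real.sqrt_nonneg _

lemma one_add_hnorm_pos (x : H n) : 0 < 1 + Hnorm x := by
  linarith [hnorm_nonneg x]

lemma sum_normSq_fst_nonneg (x : H n) : 0 ≤ ∑ j, Complex.normSq (x.1 j) :=
  Finset.sum_nonneg fun j _ => Complex.normSq_nonneg (x.1 j)

lemma hnorm_sq (x : H n) : Hnorm x ^ 2 = (∑ j, Complex.normSq (x.1 j)) + |x.2| :=
  Real.sq_sqrt (add_nonneg (sum_normSq_fst_nonneg x) (abs_nonneg _))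

lemma abs_snd_le_hnorm_sq (x : H n) : |x.2| ≤ Hnorm x ^ 2 := by
  rw [hnorm_sq]
  exact le_add_of_nonneg_left (sum_normSq_fst_nonneg x)

lemma norm_toLp_fst_le_hnorm (x : H n) :
    ‖(WithLp.toLp 2 x.1 : EuclideanSpace ℂ (Fin n))‖ ≤ Hnorm x := by
  rw [EuclideanSpace.norm_eq]
  refine Real.sqrt_le_sqrt (le_add_of_nonneg_right (abs_nonneg _)) |>.trans_eq' ?_
  simp [Complex.normSq_eq_norm_sq]

lemma norm_fst_le_hnorm (x : H n) : ‖x.1‖ ≤ Hnorm x :=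
  (pi_norm_le_iff_of_nonneg (hnorm_nonneg x)).2 fun j =>
    (PiLp.norm_apply_le (WithLp.toLp 2 x.1 : EuclideanSpace ℂ (Fin n)) j).trans
      (norm_toLp_fst_le_hnorm x)

lemma one_add_hnorm_le (x : H n) : 1 + Hnorm x ≤ (n + 2) * (1 + ‖x‖) := by
  have hsum : ∑ j, Complex.normSq (x.1 j) ≤ n * ‖x‖ ^ 2 := by
    calc ∑ j, Complex.normSq (x.1 j) ≤ ∑ _j : Fin n, ‖x‖ ^ 2 := by
          gcongr with j
          rw [Complex.normSq_eq_norm_sq]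
          gcongr
          exact (norm_le_pi_norm x.1 j).trans (norm_fst_le x)
      _ = n * ‖x‖ ^ 2 := by simp
  have hsnd : |x.2| ≤ ‖x‖ := norm_snd_le x
  have hx : Hnorm x ≤ (n + 1) * (1 + ‖x‖) := by
    rw [Hnorm, Real.sqrt_le_left (by positivity)]
    have hn : (0 : ℝ) ≤ n := n.cast_nonneg
    nlinarith [norm_nonneg x, mul_nonneg hn (norm_nonneg x),
      mul_nonneg (mul_nonneg hn hn) (sq_nonneg ‖x‖)]
  linarith [norm_nonneg x]

lemma abs_im_sum_mul_conj_le (x y : H n) :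
    |(∑ j, x.1 j * conj (y.1 j)).im| ≤ Hnorm x * Hnorm y :=
  calc |(∑ j, x.1 j * conj (y.1 j)).im| ≤ ‖∑ j, x.1 j * conj (y.1 j)‖ := abs_im_le_norm _
    _ = ‖(inner ℂ (WithLp.toLp 2 y.1 : EuclideanSpace ℂ (Fin n)) (WithLp.toLp 2 x.1))‖ := rfl
    _ ≤ ‖(WithLp.toLp 2 y.1 : EuclideanSpace ℂ (Fin n))‖ * ‖WithLp.toLp 2 x.1‖ :=
        norm_inner_le_norm _ _
    _ ≤ Hnorm y * Hnorm x := mul_le_mul (norm_toLp_fst_le_hnorm y) (norm_toLp_fst_le_hnorm x)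
        (norm_nonneg _) (hnorm_nonneg y)
    _ = Hnorm x * Hnorm y := mul_comm _ _

lemma hmul_hinv_hmul (x y : H n) : Hmul (Hmul x (Hinv y)) y = x := by
  have hy : (∑ j, y.1 j * conj (y.1 j)).im = 0 := by simp [Complex.mul_conj]
  ext1
  · simp [Hmul, Hinv]
  · simp only [Hmul, Hinv, Pi.add_apply, Pi.neg_apply, map_neg, mul_neg, add_mul, neg_mul,
      Finset.sum_add_distrib, Finset.sum_neg_distrib, Complex.add_im, Complex.neg_im, hy]
    ring

lemma hmul_hinv_sub (x y : H n) :
    Hmul x (Hinv y) - x = (-y.1, -y.2 - 2 * (∑ j, x.1 j * conj (y.1 j)).im) := by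
  ext1
  · simp [Hmul, Hinv]
  · simp only [Hmul, Hinv, Prod.snd_sub, Pi.neg_apply, map_neg, mul_neg,
      Finset.sum_neg_distrib, Complex.neg_im]
    ring

lemma hmul_hinv_smul_sub (x y : H n) (θ : ℝ) :
    Hmul x (Hinv (θ • y)) - x = θ • (Hmul x (Hinv y) - x) := by
  have hsum : ∑ j, x.1 j * conj ((θ • y.1) j) = θ * ∑ j, x.1 j * conj (y.1 j) := by
    rw [Finset.mul_sum]
    refine Finset.sum_congr rfl fun j _ => ?_
    simp only [Pi.smul_apply, Complex.real_smul, map_mul, Complex.conj_ofReal]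
    ring
  rw [hmul_hinv_sub, hmul_hinv_sub]
  ext1
  · simp
  · simp only [Prod.smul_fst, Prod.smul_snd, smul_eq_mul, hsum, Complex.im_ofReal_mul]
    ring

lemma hnorm_smul_le (y : H n) {θ : ℝ} (hθ : θ ∈ Set.Icc (0 : ℝ) 1) :
    Hnorm (θ • y) ≤ Hnorm y := by
  obtain ⟨hθ0, hθ1⟩ := hθ
  have hsum : ∑ j, Complex.normSq ((θ • y).1 j) = θ ^ 2 * ∑ j, Complex.normSq (y.1 j) := by
    simp [Finset.mul_sum, Complex.real_smul, Complex.normSq_mul, sq]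
  have hS := sum_normSq_fst_nonneg y
  have hθ2 : θ ^ 2 ≤ 1 := by nlinarith
  apply Real.sqrt_le_sqrt
  rw [hsum, Prod.smul_snd, smul_eq_mul, abs_mul, abs_of_nonneg hθ0]
  nlinarith [abs_nonneg y.2]

lemma segment_hmul_hinv (x y : H n) (w : ℝ) :
    segment ℝ ((x, w) : H n × ℝ) (Hmul x (Hinv y), w)
      = (fun θ : ℝ => ((Hmul x (Hinv (θ • y)), w) : H n × ℝ)) '' Set.Icc 0 1 := by
  rw [segment_eq_image']
  refine Set.image_congr fun θ _ => ?_
  ext1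
  · simp [← hmul_hinv_smul_sub]
  · simp

lemma norm_hmul_hinv_sub_le (x y : H n) :
    ‖Hmul x (Hinv y) - x‖ ≤ Hnorm y * (1 + Hnorm y + 2 * Hnorm x) := by
  have hx := hnorm_nonneg x
  have hy := hnorm_nonneg y
  rw [hmul_hinv_sub, Prod.norm_def, norm_neg, Real.norm_eq_abs]
  refine max_le (by nlinarith [norm_fst_le_hnorm y]) ?_
  calc |-y.2 - 2 * (∑ j, x.1 j * conj (y.1 j)).im|
      ≤ |y.2| + 2 * |(∑ j, x.1 j * conj (y.1 j)).im| := by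
        refine (abs_sub _ _).trans_eq ?_
        rw [abs_neg, abs_mul, abs_two]
    _ ≤ Hnorm y ^ 2 + 2 * (Hnorm x * Hnorm y) := by
        gcongr
        exacts [abs_snd_le_hnorm_sq y, abs_im_sum_mul_conj_le x y]
    _ ≤ Hnorm y * (1 + Hnorm y + 2 * Hnorm x) := by nlinarith

/-- The quasi-triangle inequality, applied to `x = (x∘y⁻¹)∘y`. -/
lemma one_add_hnorm_le_of_hnorm_le {γ : ℝ} (hγ : 1 ≤ γ)
    (hγ' : ∀ x y : H n, Hnorm (Hmul x y) ≤ γ * (Hnorm x + Hnorm y)) {x y : H n}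
    (hy : Hnorm y ≤ 1 / (2 * γ) * (1 + Hnorm x)) :
    1 + Hnorm x ≤ 2 * γ * (1 + Hnorm (Hmul x (Hinv y))) := by
  have htri := hγ' (Hmul x (Hinv y)) y
  rw [hmul_hinv_hmul] at htri
  have hγy : 2 * γ * Hnorm y ≤ 1 + Hnorm x := by
    rwa [one_div_mul_eq_div, le_div_iff₀' (by positivity)] at hy
  nlinarith [hnorm_nonneg (Hmul x (Hinv y))]

end Heisenberg

namespace SchwartzMap

variable {E V : Type*} [NormedAddCommGroup E] [NormedSpace ℝ E]
  [NormedAddCommGroup V] [NormedSpace ℝ V]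

lemma exists_one_add_norm_pow_mul_le (f : 𝓢(E, V)) (k : ℕ) :
    ∃ C > 0, ∀ x, (1 + ‖x‖) ^ k * ‖f x‖ ≤ C := by
  set S := (Finset.Iic (k, 0)).sup (fun m => SchwartzMap.seminorm ℝ m.1 m.2) f
  refine ⟨2 ^ k * S + 1, by positivity, fun x => ?_⟩
  have h := one_add_le_sup_seminorm_apply (𝕜 := ℝ) (m := (k, 0)) le_rfl le_rfl f x
  rw [norm_iteratedFDeriv_zero] at h
  linarith

variable {n : ℕ}

lemma exists_hnorm_weight_mul_le (f : 𝓢(H n × ℝ, V)) (M M' : ℕ) :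
    ∃ C > 0, ∀ a v, (1 + Hnorm a) ^ M * (1 + |v|) ^ M' * ‖f (a, v)‖ ≤ C := by
  obtain ⟨C, hC, hf⟩ := f.exists_one_add_norm_pow_mul_le (M + M')
  refine ⟨(n + 2) ^ M * C, by positivity, fun a v => ?_⟩
  have ha : 1 + Hnorm a ≤ (n + 2) * (1 + ‖((a, v) : H n × ℝ)‖) :=
    (one_add_hnorm_le a).trans (by gcongr; exact norm_fst_le ((a, v) : H n × ℝ))
  have hv : 1 + |v| ≤ 1 + ‖((a, v) : H n × ℝ)‖ := by
    gcongr
    exact norm_snd_le ((a, v) : H n × ℝ)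
  calc (1 + Hnorm a) ^ M * (1 + |v|) ^ M' * ‖f (a, v)‖
      ≤ ((n + 2) * (1 + ‖((a, v) : H n × ℝ)‖)) ^ M * (1 + ‖((a, v) : H n × ℝ)‖) ^ M'
          * ‖f (a, v)‖ := by
        gcongr
        exact (one_add_hnorm_pos a).le
    _ = (n + 2) ^ M * ((1 + ‖((a, v) : H n × ℝ)‖) ^ (M + M') * ‖f (a, v)‖) := by
        rw [mul_pow, pow_add]; ring
    _ ≤ (n + 2) ^ M * C := by gcongr; exact hf _

lemma exists_norm_le_div_hnorm_weight (f : 𝓢(H n × ℝ, V)) (M M' : ℕ) :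
    ∃ C > 0, ∀ a v, ‖f (a, v)‖ ≤ C * (1 / (1 + Hnorm a) ^ M) * (1 / (1 + |v|) ^ M') := by
  obtain ⟨C, hC, hf⟩ := f.exists_hnorm_weight_mul_le M M'
  refine ⟨C, hC, fun a v => ?_⟩
  have := one_add_hnorm_pos a
  rw [mul_one_div, mul_one_div, div_div, le_div_iff₀ (by positivity), mul_comm]
  exact hf a v

lemma exists_norm_sub_le_of_hnorm_le (F : 𝓢(H n × ℝ, V)) {γ : ℝ} (hγ : 1 ≤ γ)
    (hγ' : ∀ x y : H n, Hnorm (Hmul x y) ≤ γ * (Hnorm x + Hnorm y)) (M M' : ℕ) :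
    ∃ C > 0, ∀ (x x' : H n) (w : ℝ), Hnorm x' ≤ 1 / (2 * γ) * (1 + Hnorm x) →
      ‖F (Hmul x (Hinv x'), w) - F (x, w)‖
        ≤ C * Hnorm x' / (1 + Hnorm x) ^ M * (1 / (1 + |w|) ^ M') := by
  obtain ⟨K, hK, hdF⟩ := (fderivCLM ℝ (H n × ℝ) V F).exists_hnorm_weight_mul_le (M + 1) M'
  refine ⟨3 * (2 * γ) ^ (M + 1) * K, by positivity, fun x x' w hx' => ?_⟩
  have hx := one_add_hnorm_pos x
  set B := (2 * γ) ^ (M + 1) * K / ((1 + Hnorm x) ^ (M + 1) * (1 + |w|) ^ M')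
  have hderiv : ∀ p ∈ segment ℝ (x, w) (Hmul x (Hinv x'), w), ‖fderiv ℝ F p‖ ≤ B := by
    rw [segment_hmul_hinv]
    rintro _ ⟨θ, hθ, rfl⟩
    have hxp := one_add_hnorm_le_of_hnorm_le hγ hγ' ((hnorm_smul_le x' hθ).trans hx')
    rw [le_div_iff₀ (by positivity)]
    calc ‖fderiv ℝ F (Hmul x (Hinv (θ • x')), w)‖ * ((1 + Hnorm x) ^ (M + 1) * (1 + |w|) ^ M')
        ≤ ‖fderiv ℝ F (Hmul x (Hinv (θ • x')), w)‖
            * ((2 * γ * (1 + Hnorm (Hmul x (Hinv (θ • x'))))) ^ (M + 1) * (1 + |w|) ^ M') := by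
          gcongr
    _ = (2 * γ) ^ (M + 1) * ((1 + Hnorm (Hmul x (Hinv (θ • x')))) ^ (M + 1) * (1 + |w|) ^ M'
            * ‖fderivCLM ℝ (H n × ℝ) V F (Hmul x (Hinv (θ • x')), w)‖) := by
          rw [fderivCLM_apply, mul_pow]; ring
    _ ≤ (2 * γ) ^ (M + 1) * K := by gcongr; exact hdF _ _
  have hdisp : ‖((Hmul x (Hinv x'), w) : H n × ℝ) - (x, w)‖ ≤ Hnorm x' * (3 * (1 + Hnorm x)) := by
    have hx'1 : Hnorm x' ≤ 1 + Hnorm x := hx'.trans <| mul_le_of_le_one_left hx.le <| by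
      rw [div_le_one (by positivity)]; linarith
    rw [Prod.mk_sub_mk, sub_self, Prod.norm_def, norm_zero, max_eq_left (norm_nonneg _)]
    refine (norm_hmul_hinv_sub_le x x').trans (mul_le_mul_of_nonneg_left ?_ (hnorm_nonneg x'))
    linarith [hnorm_nonneg x]
  calc ‖F (Hmul x (Hinv x'), w) - F (x, w)‖
      ≤ B * ‖((Hmul x (Hinv x'), w) : H n × ℝ) - (x, w)‖ :=
        (convex_segment _ _).norm_image_sub_le_of_norm_fderiv_le
          (fun p _ => F.differentiableAt) hderiv (left_mem_segment ℝ _ _)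
          (right_mem_segment ℝ _ _)
    _ ≤ B * (Hnorm x' * (3 * (1 + Hnorm x))) := by gcongr
    _ = 3 * (2 * γ) ^ (M + 1) * K * Hnorm x' / (1 + Hnorm x) ^ M * (1 / (1 + |w|) ^ M') := by
        simp only [B]
        field_simp
        ring

lemma exists_norm_sub_le (F : 𝓢(H n × ℝ, V)) (M M' : ℕ) :
    ∃ C > 0, ∀ (x x' : H n) (w : ℝ), ‖F (Hmul x (Hinv x'), w) - F (x, w)‖
      ≤ C * (1 / (1 + Hnorm (Hmul x (Hinv x'))) ^ M + 1 / (1 + Hnorm x) ^ M)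
          * (1 / (1 + |w|) ^ M') := by
  obtain ⟨C, hC, hF⟩ := F.exists_norm_le_div_hnorm_weight M M'
  refine ⟨C, hC, fun x x' w => ?_⟩
  calc ‖F (Hmul x (Hinv x'), w) - F (x, w)‖ ≤ ‖F (Hmul x (Hinv x'), w)‖ + ‖F (x, w)‖ :=
        norm_sub_le _ _
    _ ≤ _ := by linarith [hF (Hmul x (Hinv x')) w, hF x w]

end SchwartzMap

theorem statement8_general (n : ℕ) (F : SchwartzMap (H n × ℝ) ℝ) (L : ℕ)
    (γ : ℝ) (hγ : 1 < γ)
    (hγ' : ∀ x y : H n, Hnorm (Hmul x y) ≤ γ * (Hnorm x + Hnorm y)) :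
    ∃ C > 0, ∀ (x x' : H n) (w : ℝ),
      (Hnorm x' ≤ 1 / (2 * γ) * (1 + Hnorm x) →
        |F (Hmul x (Hinv x'), w) - F (x, w)|
          ≤ C * Hnorm x' / (1 + Hnorm x) ^ (L + 2 * n + 2) * (1 / (1 + |w|) ^ (L + 2))) ∧
      |F (Hmul x (Hinv x'), w) - F (x, w)|
        ≤ C * (1 / (1 + Hnorm (Hmul x (Hinv x'))) ^ (L + 2 * n + 2)
            + 1 / (1 + Hnorm x) ^ (L + 2 * n + 2)) * (1 / (1 + |w|) ^ (L + 1)) := by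
  obtain ⟨Ca, hCa, hnear⟩ := F.exists_norm_sub_le_of_hnorm_le hγ.le hγ' (L + 2 * n + 2) (L + 2)
  obtain ⟨Cb, -, hfar⟩ := F.exists_norm_sub_le (L + 2 * n + 2) (L + 1)
  refine ⟨max Ca Cb, lt_max_of_lt_left hCa, fun x x' w => ⟨fun hx' => ?_, ?_⟩⟩
  · rw [← Real.norm_eq_abs]
    refine (hnear x x' w hx').trans ?_
    have := (one_add_hnorm_pos x).le
    gcongr
    exacts [hnorm_nonneg x', le_max_left _ _]
  · rw [← Real.norm_eq_abs]
    refine (hfar x x' w).trans ?_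
    have := (one_add_hnorm_pos x).le
    have := (one_add_hnorm_pos (Hmul x (Hinv x'))).le
    gcongr
    exact le_max_right _ _

/-- single-difference estimates for a Schwartz function on ℍⁿ × ℝ. -/
theorem statement8 (n : ℕ) (F : SchwartzMap (H n × ℝ) ℝ) (L : ℕ) (hL : 0 < L)
    (γ : ℝ) (hγ : 1 < γ)
    (hγ' : ∀ x y : H n, Hnorm (Hmul x y) ≤ γ * (Hnorm x + Hnorm y)) :
    ∃ C > 0, ∀ (x x' : H n) (w : ℝ),
      (Hnorm x' ≤ 1 / (2 * γ) * (1 + Hnorm x) →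
        |F (Hmul x (Hinv x'), w) - F (x, w)|
          ≤ C * Hnorm x' / (1 + Hnorm x) ^ (L + 2 * n + 2) * (1 / (1 + |w|) ^ (L + 2))) ∧
      |F (Hmul x (Hinv x'), w) - F (x, w)|
        ≤ C * (1 / (1 + Hnorm (Hmul x (Hinv x'))) ^ (L + 2 * n + 2)
            + 1 / (1 + Hnorm x) ^ (L + 2 * n + 2)) * (1 / (1 + |w|) ^ (L + 1)) :=
  statement8_general n F L γ hγ hγ'
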